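/- Let A₁ be an n×n real matrix for which there exist constants C ≥ 0 and c > 0 with ‖exp(tA₁)‖ ≤ C·exp(−ct) for all t ≥ 0, let μ > 0, set A₂ = A₁ − μI, let β be a 1×n real row vector, and let τ ≥ 0. Then ∫₀^τ t·(−β·exp(tA₁)·A₁·1) dt + τ·β·exp(τA₁)·1 + ∫₀^∞ s·(−β·exp(τA₁)·exp(sA₂)·A₂·1) ds = β·(A₁⁻¹ − A₂⁻¹)·exp(τA₁)·1 − β·A₁⁻¹·1. (This is the paper's closed-form expression for the expected sojourn time d_j(τ) minus the term 1/σ_j.) -/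

import Mathlib

/-!
If `‖exp (t A)‖ ≤ C e^{-ct}` with `c > 0`, then `t ↦ exp (t A)` and `t ↦ t exp (t A)` are integrable
on `(0, ∞)` and vanish at infinity. The fundamental theorem of calculus applied to `exp (t A)`
gives `A ∫₀^∞ exp (t A) dt = -1`, so `A` is invertible with `A⁻¹ = -∫₀^∞ exp (t A) dt`, and applied
to `t exp (t A)` (integration by parts) it gives
`∫₀^τ t exp (t A) A dt = τ exp (τ A) - A⁻¹ (exp (τ A) - 1)` and `∫₀^∞ t exp (t A) A dt = A⁻¹`.
The matrix `A₂ = A₁ - μ I` decays at rate `c + μ` and `A₂⁻¹` commutes with `exp (τ A₁)`; the three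
terms of the sum then collapse to the closed form.
-/

open Matrix MeasureTheory

attribute [local instance] Matrix.linftyOpNormedRing Matrix.linftyOpNormedSpace

open Filter Topology Set NormedSpace

attribute [local instance] Matrix.linftyOpNormedAlgebra

theorem Commute.ringInverse_left {M₀ : Type*} [MonoidWithZero M₀] {a b : M₀} (h : Commute a b) :
    Commute (Ring.inverse a) b := by
  by_cases ha : IsUnit a
  · rw [Ring.inverse_of_isUnit ha]
    exact Commute.units_inv_left h
  · rw [Ring.inverse_non_unit a ha]
    exact Commute.zero_left b

section BanachAlgebra

variable {𝔸 : Type*} [NormedRing 𝔸] [NormedAlgebra ℝ 𝔸]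

theorem tendsto_pow_smul_exp_smul_atTop {A : 𝔸} {C c : ℝ} (hc : 0 < c)
    (hdecay : ∀ t : ℝ, 0 ≤ t → ‖exp (t • A)‖ ≤ C * Real.exp (-c * t)) (k : ℕ) :
    Tendsto (fun t : ℝ => t ^ k • exp (t • A)) atTop (𝓝 0) := by
  have hbound : Tendsto (fun t : ℝ => C / c ^ k * ((c * t) ^ k * Real.exp (-(c * t))))
      atTop (𝓝 0) := by
    simpa using ((Real.tendsto_pow_mul_exp_neg_atTop_nhds_zero k).comp
      (tendsto_id.const_mul_atTop hc)).const_mul (C / c ^ k)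
  refine squeeze_zero_norm' ((eventually_ge_atTop 0).mono fun t ht => ?_) hbound
  rw [norm_smul, norm_pow, Real.norm_of_nonneg ht]
  calc t ^ k * ‖exp (t • A)‖ ≤ t ^ k * (C * Real.exp (-c * t)) :=
        mul_le_mul_of_nonneg_left (hdecay t ht) (pow_nonneg ht k)
    _ = _ := by field_simp; ring_nf

variable [CompleteSpace 𝔸]

theorem continuous_exp_smul (A : 𝔸) : Continuous fun t : ℝ => exp (t • A) :=
  continuous_iff_continuousAt.2 fun t => (hasDerivAt_exp_smul_const A t).continuousAt

theorem integral_mul_exp_smul (A : 𝔸) (b : ℝ) :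
    ∫ t in (0 : ℝ)..b, A * exp (t • A) = exp (b • A) - 1 := by
  rw [intervalIntegral.integral_eq_sub_of_hasDerivAt (fun t _ => hasDerivAt_exp_smul_const' A t)
    ((continuous_const.mul (continuous_exp_smul A)).intervalIntegrable 0 b), zero_smul, exp_zero]

theorem hasDerivAt_smul_exp_smul (A : 𝔸) (t : ℝ) :
    HasDerivAt (fun u : ℝ => u • exp (u • A)) (t • (exp (t • A) * A) + exp (t • A)) t :=
  ((hasDerivAt_id' t).smul (hasDerivAt_exp_smul_const A t)).congr_deriv (by rw [one_smul])

theorem continuous_smul_exp_smul_mul (A : 𝔸) : Continuous fun t : ℝ => t • (exp (t • A) * A) :=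
  continuous_id.smul ((continuous_exp_smul A).mul continuous_const)

theorem integral_smul_exp_smul_mul (A : 𝔸) (b : ℝ) :
    ∫ t in (0 : ℝ)..b, t • (exp (t • A) * A) = b • exp (b • A) - ∫ t in (0 : ℝ)..b, exp (t • A) := by
  have hcont := continuous_smul_exp_smul_mul A
  have h := intervalIntegral.integral_eq_sub_of_hasDerivAt
    (fun t _ => hasDerivAt_smul_exp_smul A t)
    ((hcont.add (continuous_exp_smul A)).intervalIntegrable 0 b)
  rw [intervalIntegral.integral_add (hcont.intervalIntegrable 0 b)
    ((continuous_exp_smul A).intervalIntegrable 0 b), zero_smul, sub_zero] at h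
  exact eq_sub_of_add_eq h

theorem exp_smul_sub_smul_one (A : 𝔸) (μ s : ℝ) :
    exp (s • (A - μ • 1)) = Real.exp (-(μ * s)) • exp (s • A) := by
  have hsplit : s • (A - μ • 1) = algebraMap ℝ 𝔸 (-(μ * s)) + s • A := by
    rw [Algebra.algebraMap_eq_smul_one, smul_sub, smul_smul, neg_smul, mul_comm s μ,
      neg_add_eq_sub]
  have hball : ∀ x : 𝔸, x ∈ Metric.eball 0 (expSeries ℝ 𝔸).radius := fun x =>
    (expSeries_radius_eq_top ℝ 𝔸).symm ▸ edist_lt_top _ _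
  rw [hsplit, exp_add_of_commute_of_mem_ball (Algebra.commutes _ _) (hball _) (hball _),
    ← algebraMap_exp_comm, ← Real.exp_eq_exp_ℝ, Algebra.algebraMap_eq_smul_one, smul_mul_assoc,
    one_mul]

theorem norm_exp_smul_sub_smul_one_le {A : 𝔸} {C c : ℝ}
    (hdecay : ∀ t : ℝ, 0 ≤ t → ‖exp (t • A)‖ ≤ C * Real.exp (-c * t)) (μ : ℝ) :
    ∀ s : ℝ, 0 ≤ s → ‖exp (s • (A - μ • 1))‖ ≤ C * Real.exp (-(c + μ) * s) := by
  intro s hs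
  rw [exp_smul_sub_smul_one, norm_smul, Real.norm_of_nonneg (Real.exp_pos _).le]
  calc Real.exp (-(μ * s)) * ‖exp (s • A)‖ ≤ Real.exp (-(μ * s)) * (C * Real.exp (-c * s)) :=
        mul_le_mul_of_nonneg_left (hdecay s hs) (Real.exp_pos _).le
    _ = C * Real.exp (-(c + μ) * s) := by
        rw [mul_left_comm, ← Real.exp_add]; ring_nf

theorem integrableOn_Ioi_pow_smul_exp_smul {A : 𝔸} {C c : ℝ} (hc : 0 < c)
    (hdecay : ∀ t : ℝ, 0 ≤ t → ‖exp (t • A)‖ ≤ C * Real.exp (-c * t)) (k : ℕ) :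
    IntegrableOn (fun t : ℝ => t ^ k • exp (t • A)) (Ioi 0) := by
  have hbound : IntegrableOn (fun t : ℝ => C * (t ^ k * Real.exp (-c * t))) (Ioi 0) := by
    have h := integrableOn_rpow_mul_exp_neg_mul_rpow (s := k)
      (by linarith [k.cast_nonneg (α := ℝ)]) one_pos hc
    simp only [Real.rpow_natCast, Real.rpow_one] at h
    exact h.const_mul C
  refine hbound.mono' (((continuous_pow k).smul (continuous_exp_smul A)).aestronglyMeasurable)
    ((ae_restrict_mem measurableSet_Ioi).mono fun t (ht : 0 < t) => ?_)
  rw [norm_smul, norm_pow, Real.norm_of_nonneg ht.le, mul_left_comm]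
  exact mul_le_mul_of_nonneg_left (hdecay t ht.le) (pow_nonneg ht.le k)

theorem integrableOn_Ioi_exp_smul {A : 𝔸} {C c : ℝ} (hc : 0 < c)
    (hdecay : ∀ t : ℝ, 0 ≤ t → ‖exp (t • A)‖ ≤ C * Real.exp (-c * t)) :
    IntegrableOn (fun t : ℝ => exp (t • A)) (Ioi 0) := by
  simpa using integrableOn_Ioi_pow_smul_exp_smul hc hdecay 0

theorem integrableOn_Ioi_smul_exp_smul_mul {A : 𝔸} {C c : ℝ} (hc : 0 < c)
    (hdecay : ∀ t : ℝ, 0 ≤ t → ‖exp (t • A)‖ ≤ C * Real.exp (-c * t)) :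
    IntegrableOn (fun t : ℝ => t • (exp (t • A) * A)) (Ioi 0) := by
  simpa [smul_mul_assoc, IntegrableOn] using
    (integrableOn_Ioi_pow_smul_exp_smul hc hdecay 1).mul_const A

theorem mul_integral_Ioi_exp_smul {A : 𝔸} {C c : ℝ} (hc : 0 < c)
    (hdecay : ∀ t : ℝ, 0 ≤ t → ‖exp (t • A)‖ ≤ C * Real.exp (-c * t)) :
    A * ∫ t in Ioi (0 : ℝ), exp (t • A) = -1 := by
  have hint := integrableOn_Ioi_exp_smul hc hdecay
  rw [← integral_const_mul_of_integrable hint,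
    integral_Ioi_of_hasDerivAt_of_tendsto' (fun t _ => hasDerivAt_exp_smul_const' A t)
      (hint.const_mul A) (by simpa using tendsto_pow_smul_exp_smul_atTop hc hdecay 0),
    zero_smul, exp_zero, zero_sub]

theorem integral_Ioi_exp_smul_mul {A : 𝔸} {C c : ℝ} (hc : 0 < c)
    (hdecay : ∀ t : ℝ, 0 ≤ t → ‖exp (t • A)‖ ≤ C * Real.exp (-c * t)) :
    (∫ t in Ioi (0 : ℝ), exp (t • A)) * A = -1 := by
  have hint := integrableOn_Ioi_exp_smul hc hdecay
  rw [← integral_mul_const_of_integrable hint,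
    integral_Ioi_of_hasDerivAt_of_tendsto' (fun t _ => hasDerivAt_exp_smul_const A t)
      (hint.mul_const A) (by simpa using tendsto_pow_smul_exp_smul_atTop hc hdecay 0),
    zero_smul, exp_zero, zero_sub]

theorem isUnit_of_norm_exp_smul_le {A : 𝔸} {C c : ℝ} (hc : 0 < c)
    (hdecay : ∀ t : ℝ, 0 ≤ t → ‖exp (t • A)‖ ≤ C * Real.exp (-c * t)) :
    IsUnit A :=
  ⟨⟨A, -∫ t in Ioi (0 : ℝ), exp (t • A),
      by rw [mul_neg, mul_integral_Ioi_exp_smul hc hdecay, neg_neg],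
      by rw [neg_mul, integral_Ioi_exp_smul_mul hc hdecay, neg_neg]⟩, rfl⟩

theorem ringInverse_eq_neg_integral_Ioi_exp_smul {A : 𝔸} {C c : ℝ} (hc : 0 < c)
    (hdecay : ∀ t : ℝ, 0 ≤ t → ‖exp (t • A)‖ ≤ C * Real.exp (-c * t)) :
    Ring.inverse A = -∫ t in Ioi (0 : ℝ), exp (t • A) := by
  rw [← Ring.inverse_mul_cancel_left A (-∫ t in Ioi (0 : ℝ), exp (t • A))
    (isUnit_of_norm_exp_smul_le hc hdecay), mul_neg, mul_integral_Ioi_exp_smul hc hdecay, neg_neg,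
    mul_one]

theorem integral_Ioi_smul_exp_smul_mul {A : 𝔸} {C c : ℝ} (hc : 0 < c)
    (hdecay : ∀ t : ℝ, 0 ≤ t → ‖exp (t • A)‖ ≤ C * Real.exp (-c * t)) :
    ∫ t in Ioi (0 : ℝ), t • (exp (t • A) * A) = Ring.inverse A := by
  have hint₁ := integrableOn_Ioi_smul_exp_smul_mul hc hdecay
  have h := integral_Ioi_of_hasDerivAt_of_tendsto' (fun t _ => hasDerivAt_smul_exp_smul A t)
    (hint₁.add (integrableOn_Ioi_exp_smul hc hdecay))
    (by simpa using tendsto_pow_smul_exp_smul_atTop hc hdecay 1)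
  rw [integral_add hint₁ (integrableOn_Ioi_exp_smul hc hdecay), zero_smul, sub_zero] at h
  rw [ringInverse_eq_neg_integral_Ioi_exp_smul hc hdecay]
  exact eq_neg_of_add_eq_zero_left h

theorem integral_exp_smul {A : 𝔸} (hA : IsUnit A) (b : ℝ) :
    ∫ t in (0 : ℝ)..b, exp (t • A) = Ring.inverse A * (exp (b • A) - 1) := by
  have hint : IntervalIntegrable (fun t : ℝ => A * exp (t • A)) volume 0 b :=
    (continuous_const.mul (continuous_exp_smul A)).intervalIntegrable 0 b
  have h := (ContinuousLinearMap.mul ℝ 𝔸 (Ring.inverse A)).intervalIntegral_comp_comm hint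
  simp only [ContinuousLinearMap.mul_apply', Ring.inverse_mul_cancel_left A _ hA,
    integral_mul_exp_smul] at h
  exact h

variable {F : Type*} [NormedAddCommGroup F] [NormedSpace ℝ F] [CompleteSpace F]

theorem integral_smul_clm_apply_exp_smul_mul {A : 𝔸} (hA : IsUnit A) (L : 𝔸 →L[ℝ] F) (b : ℝ) :
    ∫ t in (0 : ℝ)..b, t • L (exp (t • A) * A)
      = b • L (exp (b • A)) - L (Ring.inverse A * (exp (b • A) - 1)) := by
  simp only [← map_smul]
  rw [L.intervalIntegral_comp_comm ((continuous_smul_exp_smul_mul A).intervalIntegrable 0 b),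
    integral_smul_exp_smul_mul, integral_exp_smul hA, map_sub, map_smul]

theorem integral_Ioi_smul_clm_apply_exp_smul_mul {A : 𝔸} {C c : ℝ} (hc : 0 < c)
    (hdecay : ∀ t : ℝ, 0 ≤ t → ‖exp (t • A)‖ ≤ C * Real.exp (-c * t)) (L : 𝔸 →L[ℝ] F) :
    ∫ t in Ioi (0 : ℝ), t • L (exp (t • A) * A) = L (Ring.inverse A) := by
  simp only [← map_smul]
  rw [L.integral_comp_comm (integrableOn_Ioi_smul_exp_smul_mul hc hdecay),
    integral_Ioi_smul_exp_smul_mul hc hdecay]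

end BanachAlgebra

namespace Matrix

variable {ι : Type*} [Fintype ι]

noncomputable def dotProductMulVecCLM (β v : ι → ℝ) : Matrix ι ι ℝ →L[ℝ] ℝ :=
  LinearMap.toContinuousLinearMap
    { toFun := fun M => β ⬝ᵥ (M *ᵥ v)
      map_add' := fun M N => by simp [add_mulVec]
      map_smul' := fun r M => by simp [smul_mulVec] }

variable [DecidableEq ι]

theorem integral_mul_neg_dotProduct_exp_smul_mulVec {A : Matrix ι ι ℝ} (hA : IsUnit A)
    (β v : ι → ℝ) (τ : ℝ) :
    ∫ t in (0 : ℝ)..τ, t * -(β ⬝ᵥ (exp (t • A) *ᵥ (A *ᵥ v)))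
      = β ⬝ᵥ ((A⁻¹ * (exp (τ • A) - 1)) *ᵥ v) - τ * (β ⬝ᵥ (exp (τ • A) *ᵥ v)) := by
  -- The functional is applied by unfolding `dotProductMulVecCLM` definitionally.
  have h : ∫ t in (0 : ℝ)..τ, t * (β ⬝ᵥ ((exp (t • A) * A) *ᵥ v))
      = τ * (β ⬝ᵥ (exp (τ • A) *ᵥ v)) - β ⬝ᵥ ((Ring.inverse A * (exp (τ • A) - 1)) *ᵥ v) :=
    integral_smul_clm_apply_exp_smul_mul hA (dotProductMulVecCLM β v) τ
  simp only [mul_neg, intervalIntegral.integral_neg, mulVec_mulVec, h, nonsing_inv_eq_ringInverse]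
  ring

theorem integral_Ioi_mul_neg_dotProduct_mul_exp_smul_mulVec {A : Matrix ι ι ℝ} {C c : ℝ}
    (hc : 0 < c) (hdecay : ∀ t : ℝ, 0 ≤ t → ‖exp (t • A)‖ ≤ C * Real.exp (-c * t))
    (E : Matrix ι ι ℝ) (β v : ι → ℝ) :
    ∫ s in Ioi (0 : ℝ), s * -(β ⬝ᵥ ((E * exp (s • A)) *ᵥ (A *ᵥ v)))
      = -(β ⬝ᵥ ((E * A⁻¹) *ᵥ v)) := by
  have h : ∫ s in Ioi (0 : ℝ), s * (β ⬝ᵥ ((E * (exp (s • A) * A)) *ᵥ v))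
      = β ⬝ᵥ ((E * Ring.inverse A) *ᵥ v) :=
    integral_Ioi_smul_clm_apply_exp_smul_mul hc hdecay
      ((dotProductMulVecCLM β v).comp (ContinuousLinearMap.mul ℝ _ E))
  simp only [mul_neg, integral_neg, mulVec_mulVec, mul_assoc, h, nonsing_inv_eq_ringInverse]

end Matrix

theorem csmdp_expected_sojourn_time_general {n : ℕ} (A₁ : Matrix (Fin n) (Fin n) ℝ)
    (C c : ℝ) (hc : 0 < c)
    (hdecay : ∀ t : ℝ, 0 ≤ t → ‖NormedSpace.exp (t • A₁)‖ ≤ C * Real.exp (-c * t))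
    (μ : ℝ) (hμ : 0 < μ)
    (A₂ : Matrix (Fin n) (Fin n) ℝ)
    (hA₂ : A₂ = A₁ - μ • (1 : Matrix (Fin n) (Fin n) ℝ))
    (β : Fin n → ℝ) (τ : ℝ) :
    (∫ t in (0:ℝ)..τ, t * (-(β ⬝ᵥ (NormedSpace.exp (t • A₁) *ᵥ (A₁ *ᵥ (1 : Fin n → ℝ))))))
      + τ * (β ⬝ᵥ (NormedSpace.exp (τ • A₁) *ᵥ (1 : Fin n → ℝ)))
      + (∫ s in Set.Ioi (0:ℝ),
          s * (-(β ⬝ᵥ ((NormedSpace.exp (τ • A₁) * NormedSpace.exp (s • A₂))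
              *ᵥ (A₂ *ᵥ (1 : Fin n → ℝ))))))
      = β ⬝ᵥ (((A₁⁻¹ - A₂⁻¹) * NormedSpace.exp (τ • A₁)) *ᵥ (1 : Fin n → ℝ))
        - β ⬝ᵥ (A₁⁻¹ *ᵥ (1 : Fin n → ℝ)) := by
  have hdecay₂ : ∀ s : ℝ, 0 ≤ s → ‖exp (s • A₂)‖ ≤ C * Real.exp (-(c + μ) * s) :=
    hA₂ ▸ norm_exp_smul_sub_smul_one_le hdecay μ
  have hcomm : Commute A₂⁻¹ (exp (τ • A₁)) := by
    rw [nonsing_inv_eq_ringInverse]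
    refine Commute.ringInverse_left (Commute.exp_right (Commute.smul_right ?_ τ))
    rw [hA₂]
    exact (Commute.refl A₁).sub_left ((Commute.one_left A₁).smul_left μ)
  rw [integral_mul_neg_dotProduct_exp_smul_mulVec (isUnit_of_norm_exp_smul_le hc hdecay),
    integral_Ioi_mul_neg_dotProduct_mul_exp_smul_mulVec (by linarith) hdecay₂, ← hcomm.eq]
  simp only [mul_sub, mul_one, sub_mul, sub_mulVec, dotProduct_sub]
  ring

/-- Let `A₁` satisfy `‖exp (t • A₁)‖ ≤ C ⬝ exp (-c t)` for all `t ≥ 0`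
(`C ≥ 0`, `c > 0`), let `μ > 0`, set `A₂ = A₁ - μI`, let `β` be a row vector and `τ ≥ 0`.
Then
`∫₀^τ t (-β exp (t A₁) A₁ 𝟙) dt + τ β exp (τ A₁) 𝟙 + ∫₀^∞ s (-β exp (τ A₁) exp (s A₂) A₂ 𝟙) ds
  = β (A₁⁻¹ - A₂⁻¹) exp (τ A₁) 𝟙 - β A₁⁻¹ 𝟙`,
the closed form of the expected sojourn time `d_j(τ)` minus `1/σ_j`. -/
theorem csmdp_expected_sojourn_time {n : ℕ} (A₁ : Matrix (Fin n) (Fin n) ℝ)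
    (C c : ℝ) (hC : 0 ≤ C) (hc : 0 < c)
    (hdecay : ∀ t : ℝ, 0 ≤ t → ‖NormedSpace.exp (t • A₁)‖ ≤ C * Real.exp (-c * t))
    (μ : ℝ) (hμ : 0 < μ)
    (A₂ : Matrix (Fin n) (Fin n) ℝ)
    (hA₂ : A₂ = A₁ - μ • (1 : Matrix (Fin n) (Fin n) ℝ))
    (β : Fin n → ℝ) (τ : ℝ) (hτ : 0 ≤ τ) :
    (∫ t in (0:ℝ)..τ, t * (-(β ⬝ᵥ (NormedSpace.exp (t • A₁) *ᵥ (A₁ *ᵥ (1 : Fin n → ℝ))))))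
      + τ * (β ⬝ᵥ (NormedSpace.exp (τ • A₁) *ᵥ (1 : Fin n → ℝ)))
      + (∫ s in Set.Ioi (0:ℝ),
          s * (-(β ⬝ᵥ ((NormedSpace.exp (τ • A₁) * NormedSpace.exp (s • A₂))
              *ᵥ (A₂ *ᵥ (1 : Fin n → ℝ))))))
      = β ⬝ᵥ (((A₁⁻¹ - A₂⁻¹) * NormedSpace.exp (τ • A₁)) *ᵥ (1 : Fin n → ℝ))
        - β ⬝ᵥ (A₁⁻¹ *ᵥ (1 : Fin n → ℝ)) :=
  csmdp_expected_sojourn_time_general A₁ C c hc hdecay μ hμ A₂ hA₂ β τ
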